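/- arXiv:1610.01686 — 2 statements merged into one kernel-verified Lean document; each statement's English description precedes it below -/
import Mathlib

section
/- For m ≥ 1 and α ≥ 1, the number of self-conjugate partitions with distinct parts that are simultaneously (2α)-core and (2αm − 1)-core equals mα. -/
/-- A partition: a weakly decreasing list of positive integers. -/
def IsPartition (l : List ℕ) : Prop :=
  l.Pairwise (· ≥ ·) ∧ ∀ x ∈ l, 0 < x

/-- Hook length at the cell in row `i`, column `j` (0-indexed). -/
def hookLength (l : List ℕ) (i j : ℕ) : ℕ :=
  (l.getD i 0 - j - 1) + ((l.filter (fun x => j < x)).length - i - 1) + 1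

/-- The Young diagram of `l` contains a hook of length `h`. -/
def HasHook (l : List ℕ) (h : ℕ) : Prop :=
  ∃ i j, j < l.getD i 0 ∧ hookLength l i j = h

/-- `l` is an `s`-core: no hook of length `s`. -/
def IsCore (s : ℕ) (l : List ℕ) : Prop := ¬ HasHook l s

/-- The conjugate (transpose) partition. -/
def conjugate (l : List ℕ) : List ℕ :=
  (List.range (l.headD 0)).map (fun j => (l.filter (fun x => j < x)).length)

def SelfConjugate (l : List ℕ) : Prop := conjugate l = l

/-- The staircase partition `(k, k-1, …, 1)`. -/
def staircase (k : ℕ) : List ℕ := (List.range k).map (fun i => k - i)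

/-- The minimal bead set: the set of first-column hook lengths. -/
def beadSet (l : List ℕ) : Finset ℕ :=
  (Finset.range l.length).image (fun i => l.getD i 0 + (l.length - 1 - i))

lemma staircase_length (k : ℕ) : (staircase k).length = k := by simp [staircase]

lemma staircase_getD (k i : ℕ) : (staircase k).getD i 0 = k - i := by
  rcases lt_or_ge i k with h | h
  · rw [List.getD_eq_getElem _ _ (by simpa [staircase])]
    simp [staircase]
  · rw [List.getD_eq_default _ _ (by simpa [staircase])]
    omega

lemma range_filter_lt (k n : ℕ) :
    ((List.range k).filter (fun i => decide (i < n))).length = min n k := by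
  induction k with
  | zero => simp
  | succ k ih =>
    rw [List.range_succ, List.filter_append, List.length_append, ih]
    by_cases h : k < n <;> simp [h] <;> omega

lemma staircase_filter (k j : ℕ) :
    ((staircase k).filter (fun x => j < x)).length = k - j := by
  unfold staircase
  rw [List.filter_map, List.length_map]
  rw [List.filter_congr (q := fun i => decide (i < k - j)) (by intro i hi; simp at hi ⊢; omega)]
  rw [range_filter_lt]
  omega

lemma staircase_headD (k : ℕ) : (staircase k).headD 0 = k := by
  cases k with
  | zero => simp [staircase]
  | succ k => simp [staircase, List.range_succ_eq_map]

lemma staircase_selfConjugate (k : ℕ) : SelfConjugate (staircase k) := by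
  unfold SelfConjugate conjugate
  rw [staircase_headD]
  unfold staircase
  exact List.map_congr_left (fun j _ => staircase_filter k j)

lemma staircase_isPartition (k : ℕ) : IsPartition (staircase k) := by
  constructor
  · rw [staircase, List.pairwise_map]
    exact (List.pairwise_lt_range (n := k)) |>.imp (fun h => by omega)
  · intro x hx
    simp only [staircase, List.mem_map, List.mem_range] at hx
    obtain ⟨i, hi, rfl⟩ := hx
    omega

lemma staircase_nodup (k : ℕ) : (staircase k).Nodup := by
  refine List.Nodup.map_on ?_ List.nodup_range
  intro x hx y hy h
  simp only [List.mem_range] at hx hy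
  omega

lemma staircase_hookLength (k i j : ℕ) (h : i + j < k) :
    hookLength (staircase k) i j = 2 * (k - i - j) - 1 := by
  unfold hookLength
  rw [staircase_getD, staircase_filter]
  omega

lemma staircase_hasHook_iff (k h : ℕ) :
    HasHook (staircase k) h ↔ h % 2 = 1 ∧ h < 2 * k := by
  constructor
  · rintro ⟨i, j, hj, rfl⟩
    rw [staircase_getD] at hj
    rw [staircase_hookLength k i j (by omega)]
    omega
  · rintro ⟨h1, h2⟩
    refine ⟨0, k - (h + 1) / 2, ?_, ?_⟩
    · rw [staircase_getD]; omega
    · rw [staircase_hookLength k 0 (k - (h + 1) / 2) (by omega)]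
      omega

lemma pairwise_gap (l : List ℕ) (hl : l.Pairwise (· > ·)) :
    ∀ d i, i + d < l.length → l.getD (i + d) 0 + d ≤ l.getD i 0 := by
  intro d
  induction d with
  | zero => intro i h; simp
  | succ d ih =>
    intro i h
    have hx : i + d < l.length := by omega
    have h1 := ih i hx
    rw [List.pairwise_iff_getElem] at hl
    have h2 : l[i + d + 1]'(by omega) < l[i + d]'hx := hl _ _ hx (by omega) (by omega)
    rw [List.getD_eq_getElem _ _ hx] at h1
    rw [show i + (d + 1) = i + d + 1 by omega, List.getD_eq_getElem _ _ (by omega : i + d + 1 < l.length)]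
    omega

lemma eq_staircase_of_mem (l : List ℕ) (hp : IsPartition l) (hsc : SelfConjugate l)
    (hnd : l.Nodup) : l = staircase l.length := by
  rcases Nat.eq_zero_or_pos l.length with h0 | h0
  · rw [List.length_eq_zero_iff] at h0; rw [h0]; rfl
  have hhead : l.headD 0 = l.length := by
    have hlen : (conjugate l).length = l.length := by rw [hsc]
    unfold conjugate at hlen; simpa using hlen
  have hgd0 : l.getD 0 0 = l.length := by
    cases l with
    | nil => simp at h0
    | cons a t => simpa using hhead
  have hgt : l.Pairwise (· > ·) :=
    (hp.1.and hnd).imp (fun ⟨a, b⟩ => lt_of_le_of_ne a (Ne.symm b))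
  have hget : ∀ i, i < l.length → l.getD i 0 = l.length - i := by
    intro i h
    have hub := pairwise_gap l hgt i 0 (by omega)
    rw [Nat.zero_add, hgd0] at hub
    have hlb := pairwise_gap l hgt (l.length - 1 - i) i (by omega)
    have hmem : l.getD (i + (l.length - 1 - i)) 0 ∈ l := by
      rw [List.getD_eq_getElem _ _ (by omega)]
      exact List.getElem_mem _
    have hpos := hp.2 _ hmem
    omega
  apply List.ext_getElem (by rw [staircase_length])
  intro i h1 h2
  have hi := hget i h1
  rw [List.getD_eq_getElem _ _ h1] at hi
  rw [hi]
  simp [staircase]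

lemma staircase_injective : Function.Injective staircase := by
  intro a b h
  have := congrArg List.length h
  simpa [staircase_length] using this

theorem selfConjugate_distinct_even_minus (m α : ℕ) (hm : 1 ≤ m) (hα : 1 ≤ α) :
    {l : List ℕ | IsPartition l ∧ SelfConjugate l ∧ l.Nodup ∧
      IsCore (2 * α) l ∧ IsCore (2 * α * m - 1) l}.ncard = m * α := by
  obtain ⟨n, hn⟩ : ∃ n, n = m * α := ⟨m * α, rfl⟩
  have hn1 : 1 ≤ n := by rw [hn]; exact Nat.mul_le_mul hm hα
  have hco : 2 * α * m - 1 = 2 * n - 1 := by rw [hn]; ring_nf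
  rw [← hn, hco]
  have hset : {l : List ℕ | IsPartition l ∧ SelfConjugate l ∧ l.Nodup ∧
      IsCore (2 * α) l ∧ IsCore (2 * n - 1) l} = staircase '' Set.Iio n := by
    ext l
    simp only [Set.mem_setOf_eq, Set.mem_image, Set.mem_Iio]
    constructor
    · rintro ⟨hp, hsc, hnd, _, hc2⟩
      have hl := eq_staircase_of_mem l hp hsc hnd
      refine ⟨l.length, ?_, hl.symm⟩
      by_contra hge
      push_neg at hge
      apply hc2
      rw [hl, staircase_hasHook_iff]
      omega
    · rintro ⟨k, hk, rfl⟩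
      refine ⟨staircase_isPartition k, staircase_selfConjugate k, staircase_nodup k, ?_, ?_⟩
      · rw [IsCore, staircase_hasHook_iff]; omega
      · rw [IsCore, staircase_hasHook_iff]; omega
  rw [hset, Set.ncard_image_of_injective _ staircase_injective]
  have : Set.Iio n = ↑(Finset.range n) := by ext x; simp
  rw [this, Set.ncard_coe_finset, Finset.card_range]
end

section
/- Let m ≥ 1 and s = 2t−1 with t ≥ 1. Among all partitions that are simultaneously s-core, (ms−1)-core and (ms+1)-core, the one with the largest number of parts has weight m²t(t−1)(t²−t+1)/6. -/
/-!
Record a partition `l` with `r` parts by its bead set `{l[i] + (r - 1 - i)}` of first-column hook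
lengths. The hook at `(i, j)` joins the bead of row `i` to the non-bead `r + j - l'[j]` (`l'` the
conjugate), so `l` is a `c`-core iff its bead set is closed under `b ↦ b - c` for `b ≥ c`. Hence a
partition that is a `g`-core for all `g ∈ G` has its beads among the gaps of the numerical semigroup
`M = ⟨G⟩`, while the gaps themselves form the bead set of such a core. When `M` has finitely many
gaps, the longest core is therefore unique, its bead set is the gap set, and its weight is
`∑ gaps - g (g - 1) / 2`, `g` being the number of gaps.

For `M = ⟨s, m s - 1, m s + 1⟩` with `s = 2 n + 1` and `1 ≤ q ≤ n`, the least elements of `M`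
congruent to `q` and to `-q` modulo `s` are `q (m s + 1)` and `q (m s - 1)`. So the gaps form `2 n`
arithmetic progressions with difference `s`, and summing them gives the weight.
-/

open Finset

namespace List

theorem Pairwise.getD_le_getD {l : List ℕ} (h : l.Pairwise (· ≥ ·)) {i j : ℕ} (hij : i ≤ j) :
    l.getD j 0 ≤ l.getD i 0 := by
  by_cases hj : j < l.length
  · rw [getD_eq_getElem l 0 hj, getD_eq_getElem l 0 (hij.trans_lt hj)]
    exact h.rel_get_of_le (a := ⟨i, hij.trans_lt hj⟩) (b := ⟨j, hj⟩) hij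
  · rw [getD_eq_default l 0 (not_lt.mp hj)]
    exact Nat.zero_le _

theorem Pairwise.getElem_add_le {l : List ℕ} (h : l.Pairwise (· > ·)) {i j : ℕ} (hij : i ≤ j)
    (hj : j < l.length) : l[j] + (j - i) ≤ l[i] := by
  induction j, hij using Nat.le_induction with
  | base => simp
  | succ j hij ih =>
    have := pairwise_iff_getElem.mp h j (j + 1) (by omega) hj (by omega)
    have := ih (by omega)
    omega

def colLen (l : List ℕ) (j : ℕ) : ℕ := (l.filter (fun x => j < x)).length

theorem colLen_le_length (l : List ℕ) (j : ℕ) : l.colLen j ≤ l.length := length_filter_le _ _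

theorem Pairwise.lt_getD_iff {l : List ℕ} (h : l.Pairwise (· ≥ ·)) (i j : ℕ) :
    j < l.getD i 0 ↔ i < l.colLen j := by
  unfold colLen
  induction l generalizing i with
  | nil => simp
  | cons a l ih =>
    by_cases hja : j < a
    · cases i with
      | zero => simp [hja]
      | succ i => simpa [hja] using ih h.of_cons i
    · have hle : ∀ x ∈ a :: l, x ≤ a := forall_mem_cons.mpr ⟨le_rfl, (pairwise_cons.mp h).1⟩
      have hnil : (a :: l).filter (fun x => j < x) = [] :=
        filter_eq_nil_iff.mpr fun x hx => by simpa using (hle x hx).trans (not_lt.mp hja)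
      have := h.getD_le_getD (Nat.zero_le i)
      rw [hnil, length_nil]
      rw [getD_cons_zero] at this
      omega

end List

theorem Nat.exists_forall_lt_iff_of_lowerClosed {P : ℕ → Prop} {n : ℕ}
    (hP : ∀ i j, i ≤ j → j < n → P j → P i) : ∃ p ≤ n, ∀ k < n, (k < p ↔ P k) := by
  induction n with
  | zero => exact ⟨0, le_rfl, by simp⟩
  | succ n ih =>
    obtain ⟨p, hpn, hp⟩ := ih fun i j hij hj => hP i j hij (by omega)
    by_cases hn : P n
    · exact ⟨n + 1, le_rfl, fun k hk => ⟨fun _ => hP k n (by omega) (by omega) hn, fun _ => hk⟩⟩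
    · refine ⟨p, by omega, fun k hk => ?_⟩
      rcases Nat.lt_succ_iff_lt_or_eq.mp hk with hk | rfl
      · exact hp k hk
      · exact ⟨fun h => by omega, fun h => absurd h hn⟩

def bead (l : List ℕ) (i : ℕ) : ℕ := l.getD i 0 + (l.length - 1 - i)

theorem beadSet_eq_image (l : List ℕ) : beadSet l = (range l.length).image (bead l) := rfl

theorem mem_beadSet {l : List ℕ} {x : ℕ} : x ∈ beadSet l ↔ ∃ i < l.length, bead l i = x := by
  simp [beadSet, bead]

theorem hookLength_eq (l : List ℕ) (i j : ℕ) :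
    hookLength l i j = (l.getD i 0 - j - 1) + (l.colLen j - i - 1) + 1 := rfl

namespace IsPartition

variable {l : List ℕ} (hl : IsPartition l)
include hl

theorem bead_add_le {i j : ℕ} (hij : i ≤ j) (hj : j < l.length) :
    bead l j + (j - i) ≤ bead l i := by
  have := hl.1.getD_le_getD hij
  unfold bead
  omega

theorem zero_notMem_beadSet : 0 ∉ beadSet l := by
  intro hmem
  obtain ⟨i, hi, h⟩ := mem_beadSet.mp hmem
  have := hl.2 _ (List.getElem_mem hi)
  rw [bead, List.getD_eq_getElem _ _ hi] at h
  omega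

theorem bead_injOn : Set.InjOn (bead l) (range l.length) := by
  intro i hi j hj hij
  simp only [coe_range, Set.mem_Iio] at hi hj
  rcases le_total i j with h | h
  · have := hl.bead_add_le h hj; omega
  · have := hl.bead_add_le h hi; omega

theorem card_beadSet : #(beadSet l) = l.length := by
  rw [beadSet_eq_image, card_image_of_injOn hl.bead_injOn, card_range]

theorem sum_beadSet : 2 * ∑ b ∈ beadSet l, b + l.length = 2 * l.sum + l.length * l.length := by
  have hrows : ∑ i ∈ range l.length, l.getD i 0 = l.sum := by
    rw [sum_range, ← Fin.sum_univ_getElem]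
    simp
  have hcols : (∑ i ∈ range l.length, (l.length - 1 - i)) * 2 + l.length =
      l.length * l.length := by
    rw [sum_range_reflect (fun i => i) l.length, sum_range_id_mul_two]
    cases l.length <;> simp; ring
  rw [beadSet_eq_image, sum_image hl.bead_injOn]
  simp only [bead, sum_add_distrib, hrows]
  omega

theorem bead_eq_hookLength_add {i j : ℕ} (hj : j < l.getD i 0) :
    bead l i = hookLength l i j + (l.length + j - l.colLen j) := by
  have hi : i < l.colLen j := (hl.1.lt_getD_iff i j).mp hj
  have hcol := l.colLen_le_length j
  rw [hookLength_eq]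
  unfold bead
  omega

theorem add_sub_colLen_notMem_beadSet (j : ℕ) : l.length + j - l.colLen j ∉ beadSet l := by
  intro hmem
  obtain ⟨k, hk, hbk⟩ := mem_beadSet.mp hmem
  have hcol := hl.1.lt_getD_iff k j
  have := l.colLen_le_length j
  unfold bead at hbk
  omega

theorem exists_add_sub_colLen_eq {i y : ℕ} (hi : i < l.length) (hy : y < bead l i)
    (hny : y ∉ beadSet l) : ∃ j < l.getD i 0, l.length + j - l.colLen j = y := by
  have hne : ∀ k < l.length, bead l k ≠ y := fun k hk h => hny (mem_beadSet.mpr ⟨k, hk, h⟩)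
  obtain ⟨p, hpn, hp⟩ := Nat.exists_forall_lt_iff_of_lowerClosed (P := fun k => y < bead l k)
    (n := l.length) fun a b hab hb h => by have := hl.bead_add_le hab hb; omega
  have above : ∀ k < p, y + (p - k) ≤ bead l k := fun k hk => by
    have := (hp (p - 1) (by omega)).mp (by omega)
    have := hl.bead_add_le (show k ≤ p - 1 by omega) (by omega)
    omega
  have below : ∀ k, p ≤ k → k < l.length → bead l k + (k - p) < y := fun k hpk hk => by
    have := (hp p (by omega)).not.mp (by omega)
    have := hne p (by omega)
    have := hl.bead_add_le hpk hk
    omega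
  have hyp : l.length ≤ y + p := by
    rcases Nat.lt_or_ge p l.length with h | h
    · have := below (l.length - 1) (by omega) (by omega); omega
    · omega
  -- the `p` beads above `y` are the rows reaching past column `y + p - l.length`
  have hcol : l.colLen (y + p - l.length) = p := by
    refine eq_of_forall_lt_iff fun k => ?_
    rw [← hl.1.lt_getD_iff k]
    by_cases hk : k < l.length
    · have h1 := above k
      have h2 := below k
      unfold bead at h1 h2
      constructor <;> intro h <;> by_contra h' <;> omega
    · rw [List.getD_eq_default _ _ (by omega)]
      omega
  refine ⟨y + p - l.length, ?_, by omega⟩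
  rw [hl.1.lt_getD_iff, hcol]
  exact (hp i hi).mpr hy

theorem isCore_iff (c : ℕ) : IsCore c l ↔ ∀ b ∈ beadSet l, c ≤ b → b - c ∈ beadSet l := by
  constructor
  · intro hcore b hb hcb
    by_contra hnb
    obtain ⟨i, hi, rfl⟩ := mem_beadSet.mp hb
    have hc : 0 < c := Nat.pos_of_ne_zero fun h => hnb (by simpa [h] using hb)
    obtain ⟨j, hj, hjy⟩ := hl.exists_add_sub_colLen_eq hi (y := bead l i - c) (by omega) hnb
    refine hcore ⟨i, j, hj, ?_⟩
    have := hl.bead_eq_hookLength_add hj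
    omega
  · rintro hclosed ⟨i, j, hj, rfl⟩
    have hb := hl.bead_eq_hookLength_add hj
    have hi : i < l.length := by
      by_contra h
      rw [List.getD_eq_default _ _ (by omega)] at hj
      omega
    apply hl.add_sub_colLen_notMem_beadSet j
    have := hclosed (bead l i) (mem_beadSet.mpr ⟨i, hi, rfl⟩) (by omega)
    rwa [show bead l i - hookLength l i j = l.length + j - l.colLen j by omega] at this

end IsPartition

def partitionOfBeads (L : List ℕ) : List ℕ := L.mapIdx fun i b => b - (L.length - 1 - i)

namespace List.Pairwise

variable {L : List ℕ} (hL : L.Pairwise (· > ·)) (h0 : 0 ∉ L)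
include hL h0

theorem length_sub_le_getElem {i : ℕ} (hi : i < L.length) : L.length - i ≤ L[i] := by
  have := hL.getElem_add_le (show i ≤ L.length - 1 by omega) (by omega)
  have : L[L.length - 1] ≠ 0 := fun h => h0 (h ▸ List.getElem_mem _)
  omega

theorem isPartition_partitionOfBeads : IsPartition (partitionOfBeads L) := by
  constructor
  · rw [List.pairwise_iff_getElem]
    intro i j hi hj hij
    simp only [partitionOfBeads, List.length_mapIdx, List.getElem_mapIdx] at hi hj ⊢
    have := hL.getElem_add_le hij.le hj
    omega
  · intro x hx
    obtain ⟨i, hi, rfl⟩ := List.getElem_of_mem hx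
    simp only [partitionOfBeads, List.length_mapIdx, List.getElem_mapIdx] at hi ⊢
    have := hL.length_sub_le_getElem h0 hi
    omega

theorem beadSet_partitionOfBeads : beadSet (partitionOfBeads L) = L.toFinset := by
  ext x
  simp only [mem_beadSet, List.mem_toFinset, List.mem_iff_getElem, bead, partitionOfBeads,
    List.length_mapIdx]
  refine exists_congr fun i => ⟨fun ⟨hi, hx⟩ => ⟨hi, ?_⟩, fun ⟨hi, hx⟩ => ⟨hi, ?_⟩⟩ <;>
    · have := hL.length_sub_le_getElem h0 hi
      simp only [List.getD_eq_getElem _ _ (show i < (L.mapIdx _).length by simpa),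
        List.getElem_mapIdx] at hx ⊢
      omega

end List.Pairwise

def partitionOfBeadSet (F : Finset ℕ) : List ℕ := partitionOfBeads (F.sort (· ≥ ·))

section partitionOfBeadSet

variable {F : Finset ℕ}

theorem length_partitionOfBeadSet (F : Finset ℕ) : (partitionOfBeadSet F).length = #F := by
  simp [partitionOfBeadSet, partitionOfBeads]

theorem isPartition_partitionOfBeadSet (h0 : 0 ∉ F) : IsPartition (partitionOfBeadSet F) :=
  F.sortedGT_sort.pairwise.isPartition_partitionOfBeads (by simpa using h0)

theorem beadSet_partitionOfBeadSet (h0 : 0 ∉ F) : beadSet (partitionOfBeadSet F) = F := by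
  rw [partitionOfBeadSet, F.sortedGT_sort.pairwise.beadSet_partitionOfBeads (by simpa using h0),
    sort_toFinset]

end partitionOfBeadSet

section Gaps

variable {G : Set ℕ} {F : Finset ℕ} (hF : ∀ x, x ∈ F ↔ x ∉ AddSubmonoid.closure G)
include hF

theorem zero_notMem_of_gaps : 0 ∉ F := by
  rw [hF, not_not]
  exact zero_mem _

theorem isCore_partitionOfBeadSet_of_gaps {g : ℕ} (hg : g ∈ AddSubmonoid.closure G) :
    IsCore g (partitionOfBeadSet F) := by
  have h0 := zero_notMem_of_gaps hF
  rw [(isPartition_partitionOfBeadSet h0).isCore_iff, beadSet_partitionOfBeadSet h0]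
  intro b hb hgb
  rw [hF] at hb ⊢
  exact fun h => hb (Nat.add_sub_cancel' hgb ▸ add_mem hg h)

namespace IsPartition

variable {l : List ℕ} (hl : IsPartition l) (hcore : ∀ g ∈ G, IsCore g l)
include hl hcore

/-- A bead at an element of the semigroup could be slid down to `0`, one generator at a time. -/
theorem beadSet_subset_of_gaps : beadSet l ⊆ F := by
  suffices ∀ x ∈ AddSubmonoid.closure G, x ∉ beadSet l from
    fun x hx => (hF x).mpr fun hxG => this x hxG hx
  intro x hx
  induction hx using AddSubmonoid.closure_induction_left with
  | zero => exact hl.zero_notMem_beadSet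
  | add_left g hg y _ ih =>
    exact fun hgy => ih <| by
      simpa using (hl.isCore_iff g).mp (hcore g hg) _ hgy (Nat.le_add_right g y)

theorem length_le_card_of_gaps : l.length ≤ #F :=
  hl.card_beadSet ▸ card_le_card (hl.beadSet_subset_of_gaps hF hcore)

theorem beadSet_eq_of_gaps (hlen : #F ≤ l.length) : beadSet l = F :=
  eq_of_subset_of_card_le (hl.beadSet_subset_of_gaps hF hcore) (hl.card_beadSet ▸ hlen)

end IsPartition

end Gaps

theorem AddSubmonoid.mem_closure_triple {a b c x : ℕ} :
    x ∈ AddSubmonoid.closure ({a, b, c} : Set ℕ) ↔ ∃ i j k : ℕ, i * a + j * b + k * c = x := by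
  rw [Set.insert_eq, AddSubmonoid.closure_union, AddSubmonoid.mem_sup]
  simp_rw [AddSubmonoid.mem_closure_singleton, AddSubmonoid.mem_closure_pair, smul_eq_mul]
  constructor
  · rintro ⟨_, ⟨i, rfl⟩, _, ⟨j, k, rfl⟩, rfl⟩
    exact ⟨i, j, k, by ring⟩
  · rintro ⟨i, j, k, rfl⟩
    exact ⟨_, ⟨i, rfl⟩, _, ⟨j, k, rfl⟩, by ring⟩

section Apery

variable {s m q k a b c : ℤ} (hm : 1 ≤ m) (hq : 1 ≤ q) (hs : 2 * q + 1 ≤ s)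
  (ha : 0 ≤ a) (hb : 0 ≤ b) (hc : 0 ≤ c)
include hm hq hs ha hb hc

/-- `q (m s + 1)` is the least element of `⟨s, m s - 1, m s + 1⟩` that is `≡ q (mod s)`. -/
theorem mul_le_of_add_mul_eq (h : q + k * s = a * s + b * (m * s - 1) + c * (m * s + 1)) :
    q * m ≤ k := by
  obtain ⟨j, hj⟩ : ∃ j, k = a + (b + c) * m + j := ⟨_, (add_sub_cancel _ k).symm⟩
  have hcb : c - b - q = j * s := by linear_combination -h + s * hj
  rw [hj]
  rcases le_or_gt 0 j with hj | hj
  · have : q ≤ b + c := by nlinarith [mul_nonneg hj (show 0 ≤ s by linarith)]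
    nlinarith [mul_nonneg (sub_nonneg.mpr this) (show 0 ≤ m by linarith)]
  · nlinarith [mul_nonneg (show 0 ≤ b + c + j * s + q by linarith) (show 0 ≤ m by linarith),
      mul_nonneg (show 0 ≤ -j - 1 by linarith) (show 0 ≤ s * m - 1 by nlinarith),
      mul_nonneg (show 0 ≤ s - 2 * q - 1 by linarith) (show 0 ≤ m by linarith)]

/-- `q (m s - 1)` is the least element of `⟨s, m s - 1, m s + 1⟩` that is `≡ -q (mod s)`. -/
theorem mul_le_add_one_of_sub_add_mul_eq
    (h : (s - q) + k * s = a * s + b * (m * s - 1) + c * (m * s + 1)) : q * m ≤ k + 1 := by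
  obtain ⟨j, hj⟩ : ∃ j, k + 1 = a + (b + c) * m + j := ⟨_, (add_sub_cancel _ (k + 1)).symm⟩
  have hcb : c - b + q = j * s := by linear_combination -h + s * hj
  rw [hj]
  rcases le_or_gt j 0 with hj | hj
  · nlinarith [mul_nonneg (show 0 ≤ b + c - q + j * s by linarith) (show 0 ≤ m by linarith),
      mul_nonneg (show 0 ≤ -j by linarith) (show 0 ≤ s * m - 1 by nlinarith)]
  · have : q ≤ b + c := by
      nlinarith [mul_nonneg (show 0 ≤ j - 1 by linarith) (show 0 ≤ s by linarith)]
    nlinarith [mul_nonneg (sub_nonneg.mpr this) (show 0 ≤ m by linarith)]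

end Apery

/-- The gaps of `⟨s, m s - 1, m s + 1⟩` in the residue classes `q` and `-q` modulo `s`. -/
def gapBlock (s m q : ℕ) : Finset ℕ :=
  (range (q * m)).image (fun k => q + k * s) ∪ (range (q * m - 1)).image (fun k => s - q + k * s)

def gapSet (n m : ℕ) : Finset ℕ := (Icc 1 n).biUnion (gapBlock (2 * n + 1) m)

section gapSet

variable {n m x : ℕ} (hm : 0 < m)
include hm

theorem notMem_closure_of_mem_gapSet (hx : x ∈ gapSet n m) :
    x ∉ AddSubmonoid.closure ({2 * n + 1, m * (2 * n + 1) - 1, m * (2 * n + 1) + 1} : Set ℕ) := by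
  have hms : 1 ≤ m * (2 * n + 1) := Nat.mul_pos hm (by omega)
  simp only [gapSet, gapBlock, mem_biUnion, mem_Icc, mem_union, mem_image, mem_range] at hx
  rw [AddSubmonoid.mem_closure_triple]
  obtain ⟨q, ⟨hq1, hqn⟩, ⟨k, hk, rfl⟩ | ⟨k, hk, rfl⟩⟩ := hx <;> rintro ⟨a, b, c, h⟩ <;>
    zify [hms] at h
  · have := mul_le_of_add_mul_eq (s := 2 * n + 1) (m := m) (q := q) (k := k) (a := a) (b := b)
      (c := c) (by exact_mod_cast hm) (by exact_mod_cast hq1) (by omega) (by positivity)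
      (by positivity) (by positivity) (by linear_combination -h)
    omega
  · have := mul_le_add_one_of_sub_add_mul_eq (s := 2 * n + 1) (m := m) (q := q) (k := k)
      (a := a) (b := b) (c := c) (by exact_mod_cast hm) (by exact_mod_cast hq1) (by omega)
      (by positivity) (by positivity) (by positivity)
      (by push_cast [show q ≤ 2 * n + 1 by omega] at h; linear_combination -h)
    omega

theorem mem_closure_of_notMem_gapSet (hx : x ∉ gapSet n m) :
    x ∈ AddSubmonoid.closure ({2 * n + 1, m * (2 * n + 1) - 1, m * (2 * n + 1) + 1} : Set ℕ) := by
  have hms : 1 ≤ m * (2 * n + 1) := Nat.mul_pos hm (by omega)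
  simp only [gapSet, gapBlock, mem_biUnion, mem_Icc, mem_union, mem_image, mem_range,
    not_exists, not_and, not_or] at hx
  rw [AddSubmonoid.mem_closure_triple]
  obtain ⟨k, r, rfl, hr⟩ : ∃ k r, x = k * (2 * n + 1) + r ∧ r < 2 * n + 1 :=
    ⟨_, _, (Nat.div_add_mod' x (2 * n + 1)).symm, Nat.mod_lt _ (by omega)⟩
  rcases Nat.eq_zero_or_pos r with rfl | hr0
  · exact ⟨k, 0, 0, by ring⟩
  rcases Nat.lt_or_ge n r with hnr | hrn
  · obtain ⟨q, rfl⟩ : ∃ q, r = 2 * n + 1 - q := ⟨2 * n + 1 - r, by omega⟩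
    have hqm : q * m ≤ k + 1 := by
      by_contra h
      exact (hx q ⟨by omega, by omega⟩).2 k (by omega) (by ring)
    refine ⟨k + 1 - q * m, q, 0, ?_⟩
    zify [hqm, hms, show q ≤ 2 * n + 1 by omega]
    ring
  · have hrm : r * m ≤ k := by
      by_contra h
      exact (hx r ⟨hr0, hrn⟩).1 k (by omega) (by ring)
    refine ⟨k - r * m, 0, r, ?_⟩
    zify [hrm, hms]
    ring

theorem mem_gapSet_iff :
    x ∈ gapSet n m ↔
      x ∉ AddSubmonoid.closure ({2 * n + 1, m * (2 * n + 1) - 1, m * (2 * n + 1) + 1} : Set ℕ) :=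
  ⟨notMem_closure_of_mem_gapSet hm, not_imp_comm.mp (mem_closure_of_notMem_gapSet hm)⟩

end gapSet

theorem injective_add_mul (a : ℕ) {s : ℕ} (hs : 0 < s) : Function.Injective fun k => a + k * s :=
  (add_right_injective a).comp (mul_left_injective₀ hs.ne')

theorem two_mul_sum_range_add_mul (a s : ℤ) (K : ℕ) :
    2 * ∑ k ∈ range K, (a + k * s) = 2 * K * a + s * K * (K - 1) := by
  induction K with
  | zero => simp
  | succ K ih => rw [sum_range_succ, mul_add, ih]; push_cast; ring

theorem six_mul_sum_Icc_of_eq_quadratic {f : ℕ → ℤ} {n : ℕ} (A B C : ℤ)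
    (hf : ∀ q ∈ Icc 1 n, f q = A * q ^ 2 + B * q + C) :
    6 * ∑ q ∈ Icc 1 n, f q = A * n * (n + 1) * (2 * n + 1) + 3 * B * n * (n + 1) + 6 * C * n := by
  rw [sum_congr rfl hf]
  clear hf
  induction n with
  | zero => simp
  | succ n ih => rw [sum_Icc_succ_top (by omega), mul_add, ih]; push_cast; ring

theorem mod_eq_of_mem_gapBlock {s m q x : ℕ} (hq : 0 < q) (hqs : q < s)
    (hx : x ∈ gapBlock s m q) : x % s = q ∨ x % s = s - q := by
  simp only [gapBlock, mem_union, mem_image, mem_range] at hx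
  rcases hx with ⟨k, -, rfl⟩ | ⟨k, -, rfl⟩
  · left; rw [Nat.add_mul_mod_self_right, Nat.mod_eq_of_lt hqs]
  · right; rw [Nat.add_mul_mod_self_right, Nat.mod_eq_of_lt (by omega)]

theorem pairwiseDisjoint_gapBlock (n m : ℕ) :
    (Icc 1 n : Set ℕ).PairwiseDisjoint (gapBlock (2 * n + 1) m) := by
  intro q hq q' hq' hne
  simp only [coe_Icc, Set.mem_Icc] at hq hq'
  refine disjoint_left.mpr fun x hx hx' => ?_
  have := mod_eq_of_mem_gapBlock (by omega) (by omega) hx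
  have := mod_eq_of_mem_gapBlock (by omega) (by omega) hx'
  omega

section gapBlock

variable {s m q : ℕ} (hq : 0 < q) (hqs : 2 * q < s)
include hq hqs

theorem disjoint_gapBlock_halves :
    Disjoint ((range (q * m)).image (fun k => q + k * s))
      ((range (q * m - 1)).image (fun k => s - q + k * s)) := by
  simp only [disjoint_left, mem_image, mem_range]
  rintro _ ⟨k, -, rfl⟩ ⟨k', -, h⟩
  have := congrArg (· % s) h
  simp only [Nat.add_mul_mod_self_right, Nat.mod_eq_of_lt (show q < s by omega),
    Nat.mod_eq_of_lt (show s - q < s by omega)] at this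
  omega

theorem card_gapBlock : #(gapBlock s m q) = q * m + (q * m - 1) := by
  rw [gapBlock, card_union_of_disjoint (disjoint_gapBlock_halves hq hqs),
    card_image_of_injective _ (injective_add_mul _ (by omega)),
    card_image_of_injective _ (injective_add_mul _ (by omega)), card_range, card_range]

theorem sum_gapBlock (hm : 0 < m) :
    ∑ x ∈ gapBlock s m q, (x : ℤ) = s * m ^ 2 * q ^ 2 - (s * m - 1) * q := by
  have hqm : 1 ≤ q * m := Nat.mul_pos hq hm
  rw [gapBlock, sum_union (disjoint_gapBlock_halves hq hqs),
    sum_image fun _ _ _ _ h => injective_add_mul _ (by omega) h,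
    sum_image fun _ _ _ _ h => injective_add_mul _ (by omega) h]
  have h1 := two_mul_sum_range_add_mul q s (q * m)
  have h2 := two_mul_sum_range_add_mul (s - q) s (q * m - 1)
  push_cast [hqm, show q ≤ s by omega] at h1 h2 ⊢
  refine mul_left_cancel₀ two_ne_zero ?_
  linear_combination h1 + h2

end gapBlock

section gapSet

variable {n m : ℕ} (hm : 0 < m)
include hm

theorem card_gapSet : (#(gapSet n m) : ℤ) = m * n * (n + 1) - n := by
  rw [gapSet, card_biUnion (pairwiseDisjoint_gapBlock n m), Nat.cast_sum]
  have := six_mul_sum_Icc_of_eq_quadratic (n := n)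
    (f := fun q => (#(gapBlock (2 * n + 1) m q) : ℤ)) 0 (2 * m) (-1) fun q hq => by
      rw [mem_Icc] at hq
      have hqm : 1 ≤ q * m := Nat.mul_pos (by omega) hm
      rw [card_gapBlock (by omega) (by omega)]
      push_cast [hqm]
      ring
  refine mul_left_cancel₀ (show (6 : ℤ) ≠ 0 by norm_num) ?_
  linear_combination this

theorem sum_gapSet :
    6 * ∑ x ∈ gapSet n m, (x : ℤ) =
      (2 * n + 1) ^ 2 * m ^ 2 * n * (n + 1) - 3 * ((2 * n + 1) * m - 1) * n * (n + 1) := by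
  rw [gapSet, sum_biUnion (pairwiseDisjoint_gapBlock n m),
    six_mul_sum_Icc_of_eq_quadratic ((2 * n + 1) * m ^ 2) (-((2 * n + 1) * m - 1)) 0
      fun q hq => by
        rw [mem_Icc] at hq
        rw [sum_gapBlock (by omega) (by omega) hm]
        push_cast
        ring]
  ring

theorem IsPartition.six_mul_sum_of_beadSet_eq_gapSet {l : List ℕ} (hl : IsPartition l)
    (hb : beadSet l = gapSet n m) : 6 * l.sum = m ^ 2 * (n + 1) * n * (n ^ 2 + n + 1) := by
  have h := hl.sum_beadSet
  rw [← hl.card_beadSet, hb] at h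
  zify at h ⊢
  linear_combination (-3) * h + sum_gapSet (n := n) hm +
    (-3 * (#(gapSet n m) + (m * n * (n + 1) - n) - 1 : ℤ)) * card_gapSet (n := n) hm

end gapSet

theorem longest_triple_core_odd (m t : ℕ) (hm : 1 ≤ m) (ht : 1 ≤ t) :
    let s := 2 * t - 1
    let P : List ℕ → Prop := fun l => IsPartition l ∧ IsCore s l ∧
      IsCore (m * s - 1) l ∧ IsCore (m * s + 1) l
    (∃ l : List ℕ, P l ∧ (∀ l' : List ℕ, P l' → l'.length ≤ l.length) ∧
      6 * l.sum = m ^ 2 * t * (t - 1) * (t ^ 2 - t + 1)) ∧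
    (∀ l : List ℕ, P l → (∀ l' : List ℕ, P l' → l'.length ≤ l.length) →
      6 * l.sum = m ^ 2 * t * (t - 1) * (t ^ 2 - t + 1)) := by
  obtain ⟨n, rfl⟩ : ∃ n, t = n + 1 := ⟨t - 1, by omega⟩
  have hs : 2 * (n + 1) - 1 = 2 * n + 1 := by omega
  have hquad : (n + 1) ^ 2 - (n + 1) + 1 = n ^ 2 + n + 1 := by
    rw [show (n + 1) ^ 2 = n ^ 2 + n + (n + 1) by ring]; omega
  simp only [hs, hquad, Nat.add_sub_cancel]
  set G : Set ℕ := {2 * n + 1, m * (2 * n + 1) - 1, m * (2 * n + 1) + 1}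
  have hF : ∀ x, x ∈ gapSet n m ↔ x ∉ AddSubmonoid.closure G := fun x => mem_gapSet_iff hm
  have hP : ∀ l, (IsPartition l ∧ IsCore (2 * n + 1) l ∧ IsCore (m * (2 * n + 1) - 1) l ∧
      IsCore (m * (2 * n + 1) + 1) l) ↔ IsPartition l ∧ ∀ g ∈ G, IsCore g l := by
    simp [G]
  simp only [hP]
  have h0 := zero_notMem_of_gaps hF
  set l₀ := partitionOfBeadSet (gapSet n m)
  have hl₀ : IsPartition l₀ := isPartition_partitionOfBeadSet h0
  have hcore₀ : ∀ g ∈ G, IsCore g l₀ := fun g hg =>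
    isCore_partitionOfBeadSet_of_gaps hF (AddSubmonoid.subset_closure hg)
  have hlen₀ : l₀.length = #(gapSet n m) := length_partitionOfBeadSet _
  refine ⟨⟨l₀, ⟨hl₀, hcore₀⟩, fun l hl => hlen₀ ▸ hl.1.length_le_card_of_gaps hF hl.2,
      hl₀.six_mul_sum_of_beadSet_eq_gapSet hm (beadSet_partitionOfBeadSet h0)⟩,
    fun l hl hlong => hl.1.six_mul_sum_of_beadSet_eq_gapSet hm ?_⟩
  exact hl.1.beadSet_eq_of_gaps hF hl.2 (hlen₀ ▸ hlong l₀ ⟨hl₀, hcore₀⟩)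
end
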